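/- Let p₁, p₂ ∈ [0,1] and let ε_BPF be the two-qubit bit-phase flip channel with Kraus operators K_{ab} = G_a^{(p₁)} ⊗ G_b^{(p₂)} (a,b ∈ {0,1}), where G₀^{(p)} = √p·I and G₁^{(p)} = √(1−p)·Y with Y = [[0, −i],[i, 0]]. Then the maximal imaginary state is invariant under ε_BPF, i.e., ε_BPF(M₊ ⊗ M₊) = M₊ ⊗ M₊; moreover, for every 4×4 density matrix ρ with all real entries, every entry of ε_BPF(ρ) is real. Hence both the imaginary power and the de-imaginary power of ε_BPF with respect to separable states vanish for the l₁-norm imaginarity measure, the robustness of imaginarity, and the relative entropy of imaginarity. -/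

import Mathlib

open Matrix Kronecker BigOperators
open scoped ComplexOrder

noncomputable section

/-- A density matrix: positive semidefinite with trace 1. -/
def IsDensityMatrix {n : Type*} [Fintype n] [DecidableEq n] (ρ : Matrix n n ℂ) : Prop :=
  ρ.PosSemidef ∧ ρ.trace = 1

/-- The l₁-norm imaginarity measure: sum of |Im ρᵢⱼ| over off-diagonal entries. -/
noncomputable def Fl1 {n : Type*} [Fintype n] [DecidableEq n] (ρ : Matrix n n ℂ) : ℝ :=
  ∑ i, ∑ j, if i = j then 0 else |(ρ i j).im|

/-- The trace norm ‖M‖₁ = Tr √(M†M). -/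
noncomputable def traceNorm {n : Type*} [Fintype n] [DecidableEq n] (M : Matrix n n ℂ) : ℝ :=
  (((Matrix.posSemidef_conjTranspose_mul_self M).1.eigenvectorUnitary.1 *
    diagonal (((↑) : ℝ → ℂ) ∘ (√·) ∘ (Matrix.posSemidef_conjTranspose_mul_self M).1.eigenvalues) *
    (star (Matrix.posSemidef_conjTranspose_mul_self M).1.eigenvectorUnitary : Matrix n n ℂ)).trace).re

/-- The robustness of imaginarity: (1/2)‖ρ − ρᵀ‖₁. -/
noncomputable def FR {n : Type*} [Fintype n] [DecidableEq n] (ρ : Matrix n n ℂ) : ℝ :=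
  traceNorm (ρ - ρᵀ) / 2

/-- Von Neumann entropy (base-2), via eigenvalues of a Hermitian matrix
(junk value 0 if not Hermitian). -/
noncomputable def vnEntropy {n : Type*} [Fintype n] [DecidableEq n] (σ : Matrix n n ℂ) : ℝ :=
  if h : σ.IsHermitian then -∑ j, (h.eigenvalues j) * Real.logb 2 (h.eigenvalues j) else 0

/-- The relative entropy of imaginarity: S(Re ρ) − S(ρ), Re ρ = (ρ + ρᵀ)/2. -/
noncomputable def Fr {n : Type*} [Fintype n] [DecidableEq n] (ρ : Matrix n n ℂ) : ℝ :=
  vnEntropy ((1/2 : ℂ) • (ρ + ρᵀ)) - vnEntropy ρ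

/-- The canonical single-qubit state ρ_A. -/
noncomputable def rhoA (A : ℝ) : Matrix (Fin 2) (Fin 2) ℂ :=
  !![(((1 + A) / 2 : ℝ) : ℂ), -(Complex.I / 2) * (Real.sqrt (1 - A ^ 2) : ℂ);
     (Complex.I / 2) * (Real.sqrt (1 - A ^ 2) : ℂ), (((1 - A) / 2 : ℝ) : ℂ)]

/-- Density matrix of the maximal imaginary state |+⟩ = (|0⟩ + i|1⟩)/√2. -/
noncomputable def Mplus : Matrix (Fin 2) (Fin 2) ℂ :=
  (1/2 : ℂ) • !![1, -Complex.I; Complex.I, 1]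

/-- Single-qubit bit-phase flip Kraus operators. -/
noncomputable def bpfKraus (p : ℝ) : Fin 2 → Matrix (Fin 2) (Fin 2) ℂ :=
  ![(Real.sqrt p : ℂ) • (1 : Matrix (Fin 2) (Fin 2) ℂ),
    (Real.sqrt (1 - p) : ℂ) • !![0, -Complex.I; Complex.I, 0]]

/-- The two-qubit bit-phase flip channel. -/
noncomputable def bpf2 (p₁ p₂ : ℝ) (ρ : Matrix (Fin 2 × Fin 2) (Fin 2 × Fin 2) ℂ) :
    Matrix (Fin 2 × Fin 2) (Fin 2 × Fin 2) ℂ :=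
  ∑ a : Fin 2, ∑ b : Fin 2,
    (bpfKraus p₁ a ⊗ₖ bpfKraus p₂ b) * ρ * (bpfKraus p₁ a ⊗ₖ bpfKraus p₂ b)ᴴ


/-!
Both Kraus operators `√p • 1` and `√(1 - p) • Y` are real or purely imaginary, so conjugation by
them commutes with entrywise complex conjugation up to a sign that cancels in `K ρ Kᴴ`: the channel
therefore maps real matrices to real matrices, and a real Hermitian matrix is symmetric, which kills
all three imaginarity measures. On product states the channel acts factorwise, and each
single-qubit factor `ρ ↦ p ρ + (1 - p) Y ρ Yᴴ` fixes `M₊` because `Y M₊ Yᴴ = M₊`.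
-/

open ComplexConjugate

lemma sum_kronecker_sum {α ι κ l m n p : Type*} [NonUnitalNonAssocSemiring α] [Fintype ι]
    [Fintype κ] (A : ι → Matrix l m α) (B : κ → Matrix n p α) :
    (∑ i, A i) ⊗ₖ (∑ j, B j) = ∑ k : ι × κ, A k.1 ⊗ₖ B k.2 := by
  ext
  simp only [kroneckerMap_apply, Matrix.sum_apply, Finset.sum_mul_sum, Fintype.sum_prod_type]

lemma sqrt_smul_mul_mul_conjTranspose {m n : Type*} [Fintype n] {q : ℝ} (hq : 0 ≤ q)
    (A : Matrix m n ℂ) (M : Matrix n n ℂ) :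
    ((√q : ℂ) • A) * M * ((√q : ℂ) • A)ᴴ = (q : ℂ) • (A * M * Aᴴ) := by
  rw [conjTranspose_smul, Complex.star_def, Complex.conj_ofReal, Matrix.smul_mul, Matrix.smul_mul,
    Matrix.mul_smul, smul_smul, ← Complex.ofReal_mul, Real.mul_self_sqrt hq]

section KrausMap

variable {α ι κ m n : Type*} [CommSemiring α] [StarRing α] [Fintype ι] [Fintype κ]
  [Fintype m] [Fintype n]

def krausMap (K : ι → Matrix n n α) (ρ : Matrix n n α) : Matrix n n α :=
  ∑ k, K k * ρ * (K k)ᴴ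

lemma krausMap_kronecker (K : ι → Matrix m m α) (L : κ → Matrix n n α)
    (ρ : Matrix m m α) (σ : Matrix n n α) :
    krausMap (fun k : ι × κ => K k.1 ⊗ₖ L k.2) (ρ ⊗ₖ σ) = krausMap K ρ ⊗ₖ krausMap L σ := by
  simp only [krausMap, sum_kronecker_sum, conjTranspose_kronecker, mul_kronecker_mul]

lemma krausMap_isHermitian (K : ι → Matrix n n α) {ρ : Matrix n n α} (hρ : ρ.IsHermitian) :
    (krausMap K ρ).IsHermitian :=
  isSelfAdjoint_sum _ fun k _ => isHermitian_mul_mul_conjTranspose (K k) hρ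

end KrausMap

section Realness

variable {m n : Type*}

def IsRealOrPureImag (K : Matrix m n ℂ) : Prop :=
  K.map conj = K ∨ K.map conj = -K

lemma map_conj_eq_self_iff {ρ : Matrix m n ℂ} : ρ.map conj = ρ ↔ ∀ i j, (ρ i j).im = 0 := by
  simp only [← Matrix.ext_iff, map_apply, Complex.conj_eq_iff_im]

lemma transpose_eq_self_of_map_conj {ρ : Matrix n n ℂ} (hρ : ρ.IsHermitian)
    (hre : ρ.map conj = ρ) : ρᵀ = ρ :=
  calc ρᵀ = (ρ.map conj)ᵀ := by rw [hre]
    _ = ρᴴ := rfl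
    _ = ρ := hρ.eq

lemma map_conj_kronecker {l p : Type*} (K : Matrix l m ℂ) (L : Matrix n p ℂ) :
    (K ⊗ₖ L).map conj = K.map conj ⊗ₖ L.map conj := by
  ext
  simp

lemma IsRealOrPureImag.kronecker {l p : Type*} {K : Matrix l m ℂ} {L : Matrix n p ℂ}
    (hK : IsRealOrPureImag K) (hL : IsRealOrPureImag L) : IsRealOrPureImag (K ⊗ₖ L) := by
  unfold IsRealOrPureImag
  rw [map_conj_kronecker]
  rcases hK with hK | hK <;> rcases hL with hL | hL <;> rw [hK, hL]
  · exact .inl rfl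
  · exact .inr (by ext; simp)
  · exact .inr (by ext; simp)
  · exact .inl (by ext; simp)

lemma IsRealOrPureImag.map_conj_mul_mul_conjTranspose [Fintype n] {K : Matrix m n ℂ}
    {ρ : Matrix n n ℂ} (hK : IsRealOrPureImag K) (hρ : ρ.map conj = ρ) :
    (K * ρ * Kᴴ).map conj = K * ρ * Kᴴ := by
  rw [Matrix.map_mul, Matrix.map_mul, conjTranspose_map (conj : ℂ → ℂ) fun _ => rfl, hρ]
  rcases hK with hK | hK <;> simp [hK]

lemma krausMap_map_conj {ι : Type*} [Fintype ι] [Fintype n] {K : ι → Matrix n n ℂ}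
    (hK : ∀ k, IsRealOrPureImag (K k)) {ρ : Matrix n n ℂ} (hρ : ρ.map conj = ρ) :
    (krausMap K ρ).map conj = krausMap K ρ := by
  ext i j
  simp only [krausMap, map_apply, Matrix.sum_apply, map_sum]
  exact Finset.sum_congr rfl fun k _ =>
    congrFun₂ ((hK k).map_conj_mul_mul_conjTranspose hρ) i j

end Realness

section Measures

variable {n : Type*} [Fintype n] [DecidableEq n] {ρ : Matrix n n ℂ}

lemma Fl1_eq_zero_of_im_eq_zero (hρ : ∀ i j, (ρ i j).im = 0) : Fl1 ρ = 0 :=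
  Finset.sum_eq_zero fun i _ => Finset.sum_eq_zero fun j _ => by simp [hρ i j]

lemma traceNorm_zero : traceNorm (0 : Matrix n n ℂ) = 0 := by
  have h := (posSemidef_conjTranspose_mul_self (0 : Matrix n n ℂ)).1
  have : h.eigenvalues = 0 := h.eigenvalues_eq_zero_iff.mpr (by simp)
  simp [traceNorm, this, Function.comp_def]

lemma FR_eq_zero_of_transpose_eq (hρ : ρᵀ = ρ) : FR ρ = 0 := by
  rw [FR, hρ, sub_self, traceNorm_zero, zero_div]

lemma Fr_eq_zero_of_transpose_eq (hρ : ρᵀ = ρ) : Fr ρ = 0 := by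
  rw [Fr, hρ, ← two_smul ℂ ρ, smul_smul, one_div, inv_mul_cancel₀ two_ne_zero, one_smul,
    sub_self]

end Measures

lemma bpf2_eq_krausMap (p₁ p₂ : ℝ) :
    bpf2 p₁ p₂ = krausMap fun k : Fin 2 × Fin 2 => bpfKraus p₁ k.1 ⊗ₖ bpfKraus p₂ k.2 := by
  ext1 ρ
  exact (Fintype.sum_prod_type' _).symm

lemma pauliY_mul_Mplus_mul_conjTranspose :
    !![0, -Complex.I; Complex.I, 0] * Mplus * (!![0, -Complex.I; Complex.I, 0])ᴴ = Mplus := by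
  ext i j
  fin_cases i <;> fin_cases j <;> simp [Mplus, mul_apply, Fin.sum_univ_two, Complex.ext_iff]

lemma krausMap_bpfKraus_Mplus {p : ℝ} (hp₀ : 0 ≤ p) (hp₁ : p ≤ 1) :
    krausMap (bpfKraus p) Mplus = Mplus := by
  rw [krausMap, Fin.sum_univ_two]
  simp only [bpfKraus, cons_val_zero, cons_val_one]
  rw [sqrt_smul_mul_mul_conjTranspose hp₀, sqrt_smul_mul_mul_conjTranspose (by linarith),
    pauliY_mul_Mplus_mul_conjTranspose, one_mul, conjTranspose_one, mul_one, ← add_smul]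
  simp

lemma bpf2_Mplus_kronecker_Mplus {p₁ p₂ : ℝ} (hp₁0 : 0 ≤ p₁) (hp₁1 : p₁ ≤ 1)
    (hp₂0 : 0 ≤ p₂) (hp₂1 : p₂ ≤ 1) : bpf2 p₁ p₂ (Mplus ⊗ₖ Mplus) = Mplus ⊗ₖ Mplus := by
  rw [bpf2_eq_krausMap, krausMap_kronecker, krausMap_bpfKraus_Mplus hp₁0 hp₁1,
    krausMap_bpfKraus_Mplus hp₂0 hp₂1]

lemma isRealOrPureImag_bpfKraus (p : ℝ) (a : Fin 2) : IsRealOrPureImag (bpfKraus p a) := by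
  unfold IsRealOrPureImag
  fin_cases a
  · left; ext i j; fin_cases i <;> fin_cases j <;> simp [bpfKraus]
  · right; ext i j; fin_cases i <;> fin_cases j <;> simp [bpfKraus]

lemma bpf2_map_conj (p₁ p₂ : ℝ) {ρ : Matrix (Fin 2 × Fin 2) (Fin 2 × Fin 2) ℂ}
    (hρ : ρ.map conj = ρ) : (bpf2 p₁ p₂ ρ).map conj = bpf2 p₁ p₂ ρ := by
  rw [bpf2_eq_krausMap]
  refine krausMap_map_conj (fun k => ?_) hρ
  exact (isRealOrPureImag_bpfKraus p₁ k.1).kronecker (isRealOrPureImag_bpfKraus p₂ k.2)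

lemma bpf2_isHermitian (p₁ p₂ : ℝ) {ρ : Matrix (Fin 2 × Fin 2) (Fin 2 × Fin 2) ℂ}
    (hρ : ρ.IsHermitian) : (bpf2 p₁ p₂ ρ).IsHermitian := by
  rw [bpf2_eq_krausMap]
  exact krausMap_isHermitian _ hρ

/-- the two-qubit bit-phase flip channel fixes the maximal imaginary state
M₊ ⊗ M₊ and preserves realness of real density matrices; hence its imaginary and
de-imaginary powers vanish for F_{l₁}, F_R and F_r. -/
theorem bpf2_powers_vanish (p₁ p₂ : ℝ) (hp₁0 : 0 ≤ p₁) (hp₁1 : p₁ ≤ 1)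
    (hp₂0 : 0 ≤ p₂) (hp₂1 : p₂ ≤ 1) :
    bpf2 p₁ p₂ (Mplus ⊗ₖ Mplus) = Mplus ⊗ₖ Mplus ∧
    (∀ ρ : Matrix (Fin 2 × Fin 2) (Fin 2 × Fin 2) ℂ, IsDensityMatrix ρ →
      (∀ i j, (ρ i j).im = 0) → ∀ i j, ((bpf2 p₁ p₂ ρ) i j).im = 0) ∧
    Fl1 (Mplus ⊗ₖ Mplus) - Fl1 (bpf2 p₁ p₂ (Mplus ⊗ₖ Mplus)) = 0 ∧
    FR (Mplus ⊗ₖ Mplus) - FR (bpf2 p₁ p₂ (Mplus ⊗ₖ Mplus)) = 0 ∧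
    Fr (Mplus ⊗ₖ Mplus) - Fr (bpf2 p₁ p₂ (Mplus ⊗ₖ Mplus)) = 0 ∧
    (∀ ρ : Matrix (Fin 2 × Fin 2) (Fin 2 × Fin 2) ℂ, IsDensityMatrix ρ →
      (∀ i j, (ρ i j).im = 0) →
      Fl1 (bpf2 p₁ p₂ ρ) = 0 ∧ FR (bpf2 p₁ p₂ ρ) = 0 ∧ Fr (bpf2 p₁ p₂ ρ) = 0) := by
  have hfix := bpf2_Mplus_kronecker_Mplus hp₁0 hp₁1 hp₂0 hp₂1
  have hreal : ∀ ρ : Matrix (Fin 2 × Fin 2) (Fin 2 × Fin 2) ℂ, (∀ i j, (ρ i j).im = 0) →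
      (bpf2 p₁ p₂ ρ).map conj = bpf2 p₁ p₂ ρ := fun ρ hρ =>
    bpf2_map_conj p₁ p₂ (map_conj_eq_self_iff.2 hρ)
  refine ⟨hfix, fun ρ _ hρ => map_conj_eq_self_iff.1 (hreal ρ hρ), by rw [hfix, sub_self],
    by rw [hfix, sub_self], by rw [hfix, sub_self], fun ρ hρ hre => ?_⟩
  have hsymm : (bpf2 p₁ p₂ ρ)ᵀ = bpf2 p₁ p₂ ρ :=
    transpose_eq_self_of_map_conj (bpf2_isHermitian p₁ p₂ hρ.1.1) (hreal ρ hre)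
  exact ⟨Fl1_eq_zero_of_im_eq_zero (map_conj_eq_self_iff.1 (hreal ρ hre)),
    FR_eq_zero_of_transpose_eq hsymm, Fr_eq_zero_of_transpose_eq hsymm⟩

end
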